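/- Let (G, Δ, ε, φ, S, α, β) be a quasi-Hopf algebra, h := (S⁻¹ ⊗ S⁻¹)(f²¹) the Drinfeld-type twist satisfying hΔ(a)h⁻¹ = (S⁻¹ ⊗ S⁻¹)(Δ^op(S(a))) and φ_h = (S⁻¹ ⊗ S⁻¹ ⊗ S⁻¹)(φ³²¹). Define Δ_L(a) := hΔ(a) and Δ_R(a) := Δ(a)h⁻¹. Then for all a ∈ G: (id ⊗ Δ_L)(Δ_L(a))·φ = (S⁻¹ ⊗ S⁻¹ ⊗ S⁻¹)(φ³²¹)·(Δ_L ⊗ id)(Δ_L(a)), and φ·(Δ_R ⊗ id)(Δ_R(a)) = (id ⊗ Δ_R)(Δ_R(a))·(S⁻¹ ⊗ S⁻¹ ⊗ S⁻¹)(φ³²¹). -/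

import Mathlib

open TensorProduct

noncomputable section

/-- A quasi-bialgebra structure (Drinfeld) on an algebra `G` over `ℂ`: algebra maps
`Δ : G → G ⊗ G` and `ε : G → ℂ`, together with an invertible reassociator
`φ ∈ G ⊗ G ⊗ G` satisfying quasi-coassociativity, the pentagon identity and the counit
axioms. -/
structure QuasiBialg (G : Type*) [Ring G] [Algebra ℂ G] where
  comul : G →ₐ[ℂ] G ⊗[ℂ] G
  counit : G →ₐ[ℂ] ℂ
  assocEl : G ⊗[ℂ] (G ⊗[ℂ] G)
  assocElInv : G ⊗[ℂ] (G ⊗[ℂ] G)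
  assocEl_mul_inv : assocEl * assocElInv = 1
  assocEl_inv_mul : assocElInv * assocEl = 1
  quasiCoassoc : ∀ a : G,
    TensorProduct.map LinearMap.id comul.toLinearMap (comul a) * assocEl =
      assocEl *
        (TensorProduct.assoc ℂ G G G)
          (TensorProduct.map comul.toLinearMap LinearMap.id (comul a))
  counit_comul_left : ∀ a : G,
    (TensorProduct.lid ℂ G)
      (TensorProduct.map counit.toLinearMap LinearMap.id (comul a)) = a
  counit_comul_right : ∀ a : G,
    (TensorProduct.rid ℂ G)
      (TensorProduct.map LinearMap.id counit.toLinearMap (comul a)) = a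
  counit_assocEl :
    TensorProduct.map LinearMap.id
        ((TensorProduct.lid ℂ G).toLinearMap ∘ₗ
          TensorProduct.map counit.toLinearMap LinearMap.id) assocEl =
      (1 : G ⊗[ℂ] G)
  pentagon :
    TensorProduct.map LinearMap.id
          (TensorProduct.map LinearMap.id comul.toLinearMap) assocEl *
        (TensorProduct.assoc ℂ G G (G ⊗[ℂ] G))
          (TensorProduct.map comul.toLinearMap LinearMap.id assocEl) =
      ((1 : G) ⊗ₜ[ℂ] assocEl) *
        TensorProduct.map LinearMap.id (TensorProduct.assoc ℂ G G G).toLinearMap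
          (TensorProduct.map LinearMap.id
            (TensorProduct.map comul.toLinearMap LinearMap.id) assocEl) *
        TensorProduct.map LinearMap.id (TensorProduct.assoc ℂ G G G).toLinearMap
          ((TensorProduct.assoc ℂ G (G ⊗[ℂ] G) G) (assocEl ⊗ₜ[ℂ] (1 : G)))

/-- A quasi-Hopf algebra structure (Drinfeld) on an algebra `G` over `ℂ`: a quasi-bialgebra
together with an invertible algebra antimorphism `S` and elements `α, β ∈ G` satisfying the
antipode axioms. -/
structure QuasiHopf (G : Type*) [Ring G] [Algebra ℂ G] extends QuasiBialg G where
  S : G →ₗ[ℂ] G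
  S_one : S 1 = 1
  S_mul : ∀ a b : G, S (a * b) = S b * S a
  Sinv : G →ₗ[ℂ] G
  Sinv_S : ∀ a : G, Sinv (S a) = a
  S_Sinv : ∀ a : G, S (Sinv a) = a
  alphaEl : G
  betaEl : G
  antipode_left : ∀ a : G,
    LinearMap.mul' ℂ G
        (TensorProduct.map (LinearMap.mulRight ℂ alphaEl ∘ₗ S) LinearMap.id (comul a)) =
      counit a • alphaEl
  antipode_right : ∀ a : G,
    LinearMap.mul' ℂ G
        (TensorProduct.map (LinearMap.mulRight ℂ betaEl) S (comul a)) =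
      counit a • betaEl
  antipode_assocEl :
    (LinearMap.mul' ℂ G ∘ₗ
        TensorProduct.map (LinearMap.mulRight ℂ betaEl)
          (LinearMap.mul' ℂ G ∘ₗ
            TensorProduct.map (LinearMap.mulRight ℂ alphaEl ∘ₗ S) LinearMap.id))
      assocEl = 1
  antipode_assocElInv :
    (LinearMap.mul' ℂ G ∘ₗ
        TensorProduct.map (LinearMap.mulRight ℂ alphaEl ∘ₗ S)
          (LinearMap.mul' ℂ G ∘ₗ
            TensorProduct.map (LinearMap.mulRight ℂ betaEl) S))
      assocElInv = 1

/-- Reversal of the three tensor factors, `x ⊗ y ⊗ z ↦ z ⊗ y ⊗ x`. -/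
def rev3 (G : Type*) [Ring G] [Algebra ℂ G] :
    G ⊗[ℂ] (G ⊗[ℂ] G) →ₗ[ℂ] G ⊗[ℂ] (G ⊗[ℂ] G) :=
  TensorProduct.map LinearMap.id (TensorProduct.comm ℂ G G).toLinearMap ∘ₗ
    (TensorProduct.assoc ℂ G G G).toLinearMap ∘ₗ
    TensorProduct.map (TensorProduct.comm ℂ G G).toLinearMap LinearMap.id ∘ₗ
    (TensorProduct.assoc ℂ G G G).symm.toLinearMap ∘ₗ
    TensorProduct.map LinearMap.id (TensorProduct.comm ℂ G G).toLinearMap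

/-! Both identities are quasi-coassociativity of `Δ` conjugated by the twist. For `Δ_L`,
`(id ⊗ Δ_L)(Δ_L a) = h₂₃ (id ⊗ Δ)(h) · (id ⊗ Δ)(Δ a)`; moving `φ` across `(id ⊗ Δ)(Δ a)` and
inserting `(Δ ⊗ id)(h⁻¹) h₁₂⁻¹ · h₁₂ (Δ ⊗ id)(h) = 1` in front of `(Δ ⊗ id)(Δ a)` turns the
prefactor `h₂₃ (id ⊗ Δ)(h) φ` into `φ_h` and what follows into `(Δ_L ⊗ id)(Δ_L a)`. The case
of `Δ_R` is the mirror image. -/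

section Twist

variable {R A B M : Type*} [CommSemiring R] [Semiring A] [Algebra R A] [Semiring B] [Algebra R B]
  [AddCommMonoid M] [Module R M]

theorem map_id_mulLeft_comp (f : M →ₗ[R] B) (b : B) (x : A ⊗[R] M) :
    map LinearMap.id (LinearMap.mulLeft R b ∘ₗ f) x = ((1 : A) ⊗ₜ b) * map LinearMap.id f x := by
  induction x using TensorProduct.induction_on with
  | zero => simp
  | tmul a m => simp
  | add x y hx hy => simp only [map_add, hx, hy, mul_add]

theorem map_mulLeft_comp_id (f : M →ₗ[R] B) (b : B) (x : M ⊗[R] A) :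
    map (LinearMap.mulLeft R b ∘ₗ f) LinearMap.id x = (b ⊗ₜ (1 : A)) * map f LinearMap.id x := by
  induction x using TensorProduct.induction_on with
  | zero => simp
  | tmul m a => simp
  | add x y hx hy => simp only [map_add, hx, hy, mul_add]

theorem map_id_mulRight_comp (f : M →ₗ[R] B) (b : B) (x : A ⊗[R] M) :
    map LinearMap.id (LinearMap.mulRight R b ∘ₗ f) x = map LinearMap.id f x * ((1 : A) ⊗ₜ b) := by
  induction x using TensorProduct.induction_on with
  | zero => simp
  | tmul a m => simp
  | add x y hx hy => simp only [map_add, hx, hy, add_mul]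

theorem map_mulRight_comp_id (f : M →ₗ[R] B) (b : B) (x : M ⊗[R] A) :
    map (LinearMap.mulRight R b ∘ₗ f) LinearMap.id x = map f LinearMap.id x * (b ⊗ₜ (1 : A)) := by
  induction x using TensorProduct.induction_on with
  | zero => simp
  | tmul m a => simp
  | add x y hx hy => simp only [map_add, hx, hy, add_mul]

theorem map_id_algHom_mul {C : Type*} [Semiring C] [Algebra R C] (f : B →ₐ[R] C) (x y : A ⊗[R] B) :
    map LinearMap.id f.toLinearMap (x * y) =
      map LinearMap.id f.toLinearMap x * map LinearMap.id f.toLinearMap y :=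
  map_mul (Algebra.TensorProduct.map (AlgHom.id R A) f) x y

theorem map_algHom_id_mul {C : Type*} [Semiring C] [Algebra R C] (f : B →ₐ[R] C) (x y : B ⊗[R] A) :
    map f.toLinearMap LinearMap.id (x * y) =
      map f.toLinearMap LinearMap.id x * map f.toLinearMap LinearMap.id y :=
  map_mul (Algebra.TensorProduct.map f (AlgHom.id R A)) x y

theorem assoc_mul {C : Type*} [Semiring C] [Algebra R C] (x y : (A ⊗[R] B) ⊗[R] C) :
    TensorProduct.assoc R A B C (x * y) =
      TensorProduct.assoc R A B C x * TensorProduct.assoc R A B C y :=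
  map_mul (Algebra.TensorProduct.assoc R R R A B C) x y

theorem assoc_one {C : Type*} [Semiring C] [Algebra R C] :
    TensorProduct.assoc R A B C 1 = 1 :=
  map_one (Algebra.TensorProduct.assoc R R R A B C)

/-- The twisted reassociator `φ_F`, with `Finv` standing for `F⁻¹`. -/
def twistedAssoc (Δ : A →ₐ[R] A ⊗[R] A) (φ : A ⊗[R] (A ⊗[R] A)) (F Finv : A ⊗[R] A) :
    A ⊗[R] (A ⊗[R] A) :=
  ((1 : A) ⊗ₜ F) * map LinearMap.id Δ.toLinearMap F * φ *
    TensorProduct.assoc R A A A (map Δ.toLinearMap LinearMap.id Finv) *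
    TensorProduct.assoc R A A A (Finv ⊗ₜ (1 : A))

section TwistedAssoc

variable (Δ : A →ₐ[R] A ⊗[R] A) (φ : A ⊗[R] (A ⊗[R] A)) {F Finv : A ⊗[R] A}

theorem twistedAssoc_mul_assoc (hF : Finv * F = 1) :
    twistedAssoc Δ φ F Finv *
        TensorProduct.assoc R A A A ((F ⊗ₜ (1 : A)) * map Δ.toLinearMap LinearMap.id F) =
      ((1 : A) ⊗ₜ F) * map LinearMap.id Δ.toLinearMap F * φ := by
  have hcancel : map Δ.toLinearMap LinearMap.id Finv * (Finv ⊗ₜ (1 : A)) *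
      ((F ⊗ₜ (1 : A)) * map Δ.toLinearMap LinearMap.id F) = 1 := by
    rw [mul_assoc, ← mul_assoc (Finv ⊗ₜ (1 : A)), Algebra.TensorProduct.tmul_mul_tmul, hF, one_mul,
      ← Algebra.TensorProduct.one_def, one_mul, ← map_algHom_id_mul, hF]
    exact map_one (Algebra.TensorProduct.map Δ (AlgHom.id R A))
  calc _ = ((1 : A) ⊗ₜ F) * map LinearMap.id Δ.toLinearMap F * φ *
        TensorProduct.assoc R A A A (map Δ.toLinearMap LinearMap.id Finv * (Finv ⊗ₜ (1 : A)) *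
          ((F ⊗ₜ (1 : A)) * map Δ.toLinearMap LinearMap.id F)) := by
        simp only [twistedAssoc, assoc_mul, mul_assoc]
    _ = _ := by rw [hcancel, assoc_one, mul_one]

theorem mul_twistedAssoc (hF : Finv * F = 1) :
    map LinearMap.id Δ.toLinearMap Finv * ((1 : A) ⊗ₜ Finv) * twistedAssoc Δ φ F Finv =
      φ * TensorProduct.assoc R A A A
        (map Δ.toLinearMap LinearMap.id Finv * (Finv ⊗ₜ (1 : A))) := by
  have hcancel : map LinearMap.id Δ.toLinearMap Finv * ((1 : A) ⊗ₜ Finv) *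
      (((1 : A) ⊗ₜ F) * map LinearMap.id Δ.toLinearMap F) = 1 := by
    rw [mul_assoc, ← mul_assoc ((1 : A) ⊗ₜ Finv), Algebra.TensorProduct.tmul_mul_tmul, hF, one_mul,
      ← Algebra.TensorProduct.one_def, one_mul, ← map_id_algHom_mul, hF]
    exact map_one (Algebra.TensorProduct.map (AlgHom.id R A) Δ)
  calc _ = map LinearMap.id Δ.toLinearMap Finv * ((1 : A) ⊗ₜ Finv) *
        (((1 : A) ⊗ₜ F) * map LinearMap.id Δ.toLinearMap F) * φ *
          TensorProduct.assoc R A A A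
            (map Δ.toLinearMap LinearMap.id Finv * (Finv ⊗ₜ (1 : A))) := by
        simp only [twistedAssoc, assoc_mul, mul_assoc]
    _ = _ := by rw [hcancel, one_mul]

theorem comul_twistLeft_quasiCoassoc
    (hΔ : ∀ a : A, map LinearMap.id Δ.toLinearMap (Δ a) * φ =
      φ * TensorProduct.assoc R A A A (map Δ.toLinearMap LinearMap.id (Δ a)))
    (hF : Finv * F = 1) (a : A) :
    map LinearMap.id (LinearMap.mulLeft R F ∘ₗ Δ.toLinearMap)
        ((LinearMap.mulLeft R F ∘ₗ Δ.toLinearMap) a) * φ =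
      twistedAssoc Δ φ F Finv *
        TensorProduct.assoc R A A A (map (LinearMap.mulLeft R F ∘ₗ Δ.toLinearMap) LinearMap.id
          ((LinearMap.mulLeft R F ∘ₗ Δ.toLinearMap) a)) := by
  calc _ = ((1 : A) ⊗ₜ F) * map LinearMap.id Δ.toLinearMap F *
        (map LinearMap.id Δ.toLinearMap (Δ a) * φ) := by
        rw [LinearMap.comp_apply, LinearMap.mulLeft_apply, map_id_mulLeft_comp, map_id_algHom_mul]
        simp only [AlgHom.toLinearMap_apply, mul_assoc]
    _ = ((1 : A) ⊗ₜ F) * map LinearMap.id Δ.toLinearMap F * φ *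
        TensorProduct.assoc R A A A (map Δ.toLinearMap LinearMap.id (Δ a)) := by
        rw [hΔ, ← mul_assoc]
    _ = _ := by
        rw [← twistedAssoc_mul_assoc Δ φ hF, mul_assoc, ← assoc_mul, LinearMap.comp_apply,
          LinearMap.mulLeft_apply, AlgHom.toLinearMap_apply, map_mulLeft_comp_id, map_algHom_id_mul,
          mul_assoc]

theorem comul_twistRight_quasiCoassoc
    (hΔ : ∀ a : A, map LinearMap.id Δ.toLinearMap (Δ a) * φ =
      φ * TensorProduct.assoc R A A A (map Δ.toLinearMap LinearMap.id (Δ a)))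
    (hF : Finv * F = 1) (a : A) :
    φ * TensorProduct.assoc R A A A (map (LinearMap.mulRight R Finv ∘ₗ Δ.toLinearMap) LinearMap.id
          ((LinearMap.mulRight R Finv ∘ₗ Δ.toLinearMap) a)) =
      map LinearMap.id (LinearMap.mulRight R Finv ∘ₗ Δ.toLinearMap)
          ((LinearMap.mulRight R Finv ∘ₗ Δ.toLinearMap) a) * twistedAssoc Δ φ F Finv := by
  calc _ = φ * TensorProduct.assoc R A A A (map Δ.toLinearMap LinearMap.id (Δ a)) *
        TensorProduct.assoc R A A A (map Δ.toLinearMap LinearMap.id Finv * (Finv ⊗ₜ (1 : A))) := by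
        rw [LinearMap.comp_apply, LinearMap.mulRight_apply, AlgHom.toLinearMap_apply,
          map_mulRight_comp_id, map_algHom_id_mul, mul_assoc, assoc_mul, mul_assoc]
    _ = map LinearMap.id Δ.toLinearMap (Δ a) *
        (map LinearMap.id Δ.toLinearMap Finv * ((1 : A) ⊗ₜ Finv) * twistedAssoc Δ φ F Finv) := by
        rw [← hΔ, mul_twistedAssoc Δ φ hF, mul_assoc]
    _ = _ := by
        rw [LinearMap.comp_apply, LinearMap.mulRight_apply, map_id_mulRight_comp, map_id_algHom_mul]
        simp only [AlgHom.toLinearMap_apply, mul_assoc]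

end TwistedAssoc

end Twist

theorem statement13
    (G : Type*) [Ring G] [Algebra ℂ G] (Q : QuasiHopf G)
    (h hinv : G ⊗[ℂ] G)
    (h_inv_mul : hinv * h = 1)
    (h_phi :
      ((1 : G) ⊗ₜ[ℂ] h) *
          TensorProduct.map LinearMap.id Q.comul.toLinearMap h * Q.assocEl *
          (TensorProduct.assoc ℂ G G G)
            (TensorProduct.map Q.comul.toLinearMap LinearMap.id hinv) *
          (TensorProduct.assoc ℂ G G G) (hinv ⊗ₜ[ℂ] (1 : G)) =
        TensorProduct.map Q.Sinv (TensorProduct.map Q.Sinv Q.Sinv) (rev3 G Q.assocEl)) :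
    (∀ a : G,
      TensorProduct.map LinearMap.id (LinearMap.mulLeft ℂ h ∘ₗ Q.comul.toLinearMap)
            ((LinearMap.mulLeft ℂ h ∘ₗ Q.comul.toLinearMap) a) * Q.assocEl =
        TensorProduct.map Q.Sinv (TensorProduct.map Q.Sinv Q.Sinv) (rev3 G Q.assocEl) *
          (TensorProduct.assoc ℂ G G G)
            (TensorProduct.map (LinearMap.mulLeft ℂ h ∘ₗ Q.comul.toLinearMap) LinearMap.id
              ((LinearMap.mulLeft ℂ h ∘ₗ Q.comul.toLinearMap) a))) ∧
    (∀ a : G,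
      Q.assocEl *
          (TensorProduct.assoc ℂ G G G)
            (TensorProduct.map (LinearMap.mulRight ℂ hinv ∘ₗ Q.comul.toLinearMap)
              LinearMap.id
              ((LinearMap.mulRight ℂ hinv ∘ₗ Q.comul.toLinearMap) a)) =
        TensorProduct.map LinearMap.id (LinearMap.mulRight ℂ hinv ∘ₗ Q.comul.toLinearMap)
            ((LinearMap.mulRight ℂ hinv ∘ₗ Q.comul.toLinearMap) a) *
          TensorProduct.map Q.Sinv (TensorProduct.map Q.Sinv Q.Sinv) (rev3 G Q.assocEl)) := by
  change twistedAssoc Q.comul Q.assocEl h hinv = _ at h_phi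
  rw [← h_phi]
  exact ⟨comul_twistLeft_quasiCoassoc Q.comul Q.assocEl Q.quasiCoassoc h_inv_mul,
    comul_twistRight_quasiCoassoc Q.comul Q.assocEl Q.quasiCoassoc h_inv_mul⟩
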